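/- Let Ae > 0, σ > 0, C > 0, ε > 0 be fixed, and for σ₀ > 0 define Z(C) as in Theorem 6, i.e., Z(C) = [ −Ae/(σ²+σ₀²) + √( A²e²/(σ²+σ₀²)² − (1/(σ²+σ₀²) − 1/σ₀²)·( A²e²/(σ²+σ₀²) − 2·log(C·σ₀/√(σ²+σ₀²)) ) ) ] / ( 1/σ₀² − 1/(σ²+σ₀²) ). Then there exists κ > 0 such that for all 0 < σ₀ < κ: Z(C) < Ae/2 + ε and Z(C) > σ₀·( √( −2(1−ε·σ₀)·log σ₀ ) − ε·Ae ) (Theorem 7: any detection threshold between the lower and upper localizing values lies between σ₀(√(−2(1−εσ₀)log σ₀) − εAe) and Ae/2 + ε for sufficiently small thermal noise). -/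

import Mathlib

open Real

/-- The localizing threshold value `Z(C)` of Theorem 6. -/
noncomputable def Zfun (Ae σ σ0 C : ℝ) : ℝ :=
  (-(Ae / (σ ^ 2 + σ0 ^ 2)) +
      Real.sqrt (Ae ^ 2 / (σ ^ 2 + σ0 ^ 2) ^ 2 -
        (1 / (σ ^ 2 + σ0 ^ 2) - 1 / σ0 ^ 2) *
          (Ae ^ 2 / (σ ^ 2 + σ0 ^ 2) -
            2 * Real.log (C * σ0 / Real.sqrt (σ ^ 2 + σ0 ^ 2))))) /
    (1 / σ0 ^ 2 - 1 / (σ ^ 2 + σ0 ^ 2))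

/-!
With `s = σ²` and `t = σ0²`, `Z(C)` is the positive root of `b x² + 2 a x = D`, where
`a = Ae / (s + t)`, `b = s / (t (s + t)) ≈ 1 / σ0²` and `D = -2 log σ0 + O(1)`; so `x < Z(C)` iff
`2 a x + b x² < D`, and conversely. For the upper bound, `σ0² D → 0` (as `σ0² log σ0 → 0`) while
`σ0² b U² → U²`. For the lower bound take `x = σ0 (R - ε Ae)` with `R² = -2 (1 - ε σ0) log σ0`:
then `2 a x + b x² ≤ -2 log σ0 + (ε Ae)² - R (2 ε Ae + o(1))`, and `R → ∞` puts this below `D`.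
-/

open Filter Topology

noncomputable def posRoot (a b D : ℝ) : ℝ := (-a + √(a ^ 2 + b * D)) / b

section QuadraticRoot

variable {a b D x : ℝ}

theorem lt_posRoot_iff (hb : 0 < b) (hx : 0 ≤ a + b * x) :
    x < posRoot a b D ↔ 2 * a * x + b * x ^ 2 < D := by
  have key : a + b * x < √(a ^ 2 + b * D) ↔ 2 * a * x + b * x ^ 2 < D := by
    rw [lt_sqrt hx, show (a + b * x) ^ 2 = a ^ 2 + b * (2 * a * x + b * x ^ 2) by ring,
      add_lt_add_iff_left, mul_lt_mul_iff_right₀ hb]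
  rw [posRoot, lt_div_iff₀ hb, ← key]
  constructor <;> intro h <;> linarith

theorem posRoot_lt_iff (hb : 0 < b) (hx : 0 < a + b * x) :
    posRoot a b D < x ↔ D < 2 * a * x + b * x ^ 2 := by
  have key : √(a ^ 2 + b * D) < a + b * x ↔ D < 2 * a * x + b * x ^ 2 := by
    rw [sqrt_lt' hx, show (a + b * x) ^ 2 = a ^ 2 + b * (2 * a * x + b * x ^ 2) by ring,
      add_lt_add_iff_left, mul_lt_mul_iff_right₀ hb]
  rw [posRoot, div_lt_iff₀ hb, ← key]
  constructor <;> intro h <;> linarith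

end QuadraticRoot

theorem Zfun_eq_posRoot {Ae σ σ0 C : ℝ} (hσ0 : σ0 ≠ 0) :
    Zfun Ae σ σ0 C = posRoot (Ae / (σ ^ 2 + σ0 ^ 2)) (σ ^ 2 / (σ0 ^ 2 * (σ ^ 2 + σ0 ^ 2)))
      (Ae ^ 2 / (σ ^ 2 + σ0 ^ 2) - 2 * log (C * σ0 / √(σ ^ 2 + σ0 ^ 2))) := by
  have hb : 1 / σ0 ^ 2 - 1 / (σ ^ 2 + σ0 ^ 2) = σ ^ 2 / (σ0 ^ 2 * (σ ^ 2 + σ0 ^ 2)) := by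
    field_simp
    ring
  rw [Zfun, posRoot, hb, div_pow, ← neg_sub (1 / σ0 ^ 2), hb]
  ring_nf

theorem log_mul_div_sqrt {C σ σ0 : ℝ} (hC : C ≠ 0) (hσ0 : σ0 ≠ 0) :
    log (C * σ0 / √(σ ^ 2 + σ0 ^ 2)) = log C + log σ0 - log (σ ^ 2 + σ0 ^ 2) / 2 := by
  have : 0 < σ ^ 2 + σ0 ^ 2 := by positivity
  rw [log_div (mul_ne_zero hC hσ0) (sqrt_pos.2 this).ne', log_mul hC hσ0, log_sqrt this.le]

theorem eventually_Zfun_lt {Ae σ C U : ℝ} (hAe : 0 ≤ Ae) (hσ : σ ≠ 0) (hC : C ≠ 0) (hU : 0 < U) :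
    ∀ᶠ σ0 in 𝓝[>] 0, Zfun Ae σ σ0 C < U := by
  -- `F σ0 = σ0² (b U² - D)`, written so as to be continuous at `σ0 = 0`
  set F : ℝ → ℝ := fun σ0 ↦ σ ^ 2 / (σ ^ 2 + σ0 ^ 2) * U ^ 2
      - σ0 ^ 2 * (Ae ^ 2 / (σ ^ 2 + σ0 ^ 2) - 2 * log C + log (σ ^ 2 + σ0 ^ 2))
      + 2 * σ0 * (σ0 * log σ0)
  have hF : Continuous F := by
    have := Real.continuous_mul_log
    fun_prop (disch := intros; positivity)
  have hF0 : F 0 = U ^ 2 := by simp [F, hσ]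
  have hFpos : ∀ᶠ σ0 in 𝓝[>] 0, 0 < F σ0 :=
    nhdsWithin_le_nhds (hF.tendsto 0 |>.eventually (lt_mem_nhds (by rw [hF0]; positivity)))
  filter_upwards [self_mem_nhdsWithin, hFpos] with σ0 (hσ0 : 0 < σ0) hFσ0
  rw [Zfun_eq_posRoot hσ0.ne', posRoot_lt_iff (by positivity) (by positivity),
    log_mul_div_sqrt hC hσ0.ne']
  have hgap : σ ^ 2 / (σ0 ^ 2 * (σ ^ 2 + σ0 ^ 2)) * U ^ 2 - (Ae ^ 2 / (σ ^ 2 + σ0 ^ 2) -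
      2 * (log C + log σ0 - log (σ ^ 2 + σ0 ^ 2) / 2)) = F σ0 / σ0 ^ 2 := by
    simp only [F]
    field_simp
    ring
  have : 0 ≤ 2 * (Ae / (σ ^ 2 + σ0 ^ 2)) * U := by positivity
  have : 0 < F σ0 / σ0 ^ 2 := by positivity
  linarith

theorem tendsto_sqrt_neg_mul_log_nhdsGT_zero (ε : ℝ) :
    Tendsto (fun σ0 ↦ √(-2 * (1 - ε * σ0) * log σ0)) (𝓝[>] 0) atTop := by
  have h : Tendsto (fun σ0 : ℝ ↦ -2 * (1 - ε * σ0)) (𝓝[>] 0) (𝓝 (-2)) :=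
    ((continuous_const.mul (continuous_const.sub (continuous_const.mul continuous_id))).tendsto'
      0 (-2) (by simp)).mono_left nhdsWithin_le_nhds
  exact tendsto_sqrt_atTop.comp (h.neg_mul_atBot (by norm_num) tendsto_log_nhdsGT_zero)

theorem eventually_lt_Zfun {Ae σ C ε : ℝ} (hAe : 0 < Ae) (hσ : σ ≠ 0) (hC : C ≠ 0) (hε : 0 < ε) :
    ∀ᶠ σ0 in 𝓝[>] 0, σ0 * (√(-2 * (1 - ε * σ0) * log σ0) - ε * Ae) < Zfun Ae σ σ0 C := by
  set k := ε * Ae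
  have hk0 : 0 < k := mul_pos hε hAe
  set c₀ := log (σ ^ 2) - 2 * log C
  -- the coefficient of `-R` in `2 a x + b x²`
  set G : ℝ → ℝ := fun σ0 ↦ 2 * k * (σ ^ 2 / (σ ^ 2 + σ0 ^ 2)) - 2 * (Ae / (σ ^ 2 + σ0 ^ 2)) * σ0
  have hG : Continuous G := by fun_prop (disch := intros; positivity)
  have hG0 : G 0 = 2 * k := by simp [G, hσ]
  have hGk : ∀ᶠ σ0 in 𝓝[>] 0, k < G σ0 :=
    nhdsWithin_le_nhds (hG.tendsto 0 |>.eventually (lt_mem_nhds (by rw [hG0]; linarith)))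
  filter_upwards [Ioo_mem_nhdsGT one_pos, Ioo_mem_nhdsGT (one_div_pos.2 hε), hGk,
    (tendsto_sqrt_neg_mul_log_nhdsGT_zero ε).eventually_gt_atTop (max k ((k ^ 2 - c₀) / k))]
    with σ0 ⟨hσ0, hσ0_one⟩ ⟨_, hσ0_ε⟩ hGσ0 hR
  set W := -2 * (1 - ε * σ0) * log σ0
  set R := √W
  have hlog : log σ0 < 0 := log_neg hσ0 hσ0_one
  have hεσ0 : ε * σ0 < 1 := (lt_div_iff₀' hε).1 hσ0_ε
  have hW0 : 0 ≤ W := by nlinarith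
  have hW : W ≤ -2 * log σ0 := by nlinarith [mul_neg_of_pos_of_neg (mul_pos hε hσ0) hlog]
  have hRsq : R ^ 2 = W := sq_sqrt hW0
  have hRk : k < R := (le_max_left _ _).trans_lt hR
  have hRc : k ^ 2 - c₀ < R * k := (div_lt_iff₀ hk0).1 ((le_max_right _ _).trans_lt hR)
  have hst : 0 < σ ^ 2 + σ0 ^ 2 := by positivity
  have hq1 : σ ^ 2 / (σ ^ 2 + σ0 ^ 2) ≤ 1 := (div_le_one hst).2 (by nlinarith)
  have hq0 : 0 ≤ σ ^ 2 / (σ ^ 2 + σ0 ^ 2) := by positivity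
  have ha : 0 ≤ Ae / (σ ^ 2 + σ0 ^ 2) := by positivity
  rw [Zfun_eq_posRoot hσ0.ne', log_mul_div_sqrt hC hσ0.ne', lt_posRoot_iff (by positivity)
    (add_nonneg ha (mul_nonneg (by positivity) (mul_nonneg hσ0.le (sub_nonneg.2 hRk.le))))]
  have hquad : 2 * (Ae / (σ ^ 2 + σ0 ^ 2)) * (σ0 * (R - k)) +
      σ ^ 2 / (σ0 ^ 2 * (σ ^ 2 + σ0 ^ 2)) * (σ0 * (R - k)) ^ 2 =
      σ ^ 2 / (σ ^ 2 + σ0 ^ 2) * (R ^ 2 + k ^ 2) - 2 * (Ae / (σ ^ 2 + σ0 ^ 2)) * σ0 * k -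
        R * G σ0 := by
    simp only [G]
    field_simp
    ring
  have hD : -2 * log σ0 + c₀ ≤ Ae ^ 2 / (σ ^ 2 + σ0 ^ 2) -
      2 * (log C + log σ0 - log (σ ^ 2 + σ0 ^ 2) / 2) := by
    have : log (σ ^ 2) ≤ log (σ ^ 2 + σ0 ^ 2) := log_le_log (by positivity) (by nlinarith)
    have : 0 ≤ Ae ^ 2 / (σ ^ 2 + σ0 ^ 2) := by positivity
    linarith
  have hR0 : 0 < R := hk0.trans hRk
  calc _ = σ ^ 2 / (σ ^ 2 + σ0 ^ 2) * (R ^ 2 + k ^ 2) - 2 * (Ae / (σ ^ 2 + σ0 ^ 2)) * σ0 * k -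
        R * G σ0 := hquad
    _ ≤ -2 * log σ0 + k ^ 2 - R * G σ0 := by
      have : 0 ≤ Ae / (σ ^ 2 + σ0 ^ 2) * σ0 * k := by positivity
      nlinarith
    _ < -2 * log σ0 + k ^ 2 - R * k := by nlinarith
    _ < -2 * log σ0 + c₀ := by linarith
    _ ≤ _ := hD

theorem stmt_17 (Ae σ C ε : ℝ) (hAe : 0 < Ae) (hσ : 0 < σ) (hC : 0 < C) (hε : 0 < ε) :
    ∃ κ > 0, ∀ σ0 : ℝ, 0 < σ0 → σ0 < κ →
      Zfun Ae σ σ0 C < Ae / 2 + ε ∧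
      σ0 * (Real.sqrt (-2 * (1 - ε * σ0) * Real.log σ0) - ε * Ae) < Zfun Ae σ σ0 C := by
  obtain ⟨κ, hκ, hsub⟩ := mem_nhdsGT_iff_exists_Ioo_subset.1
    ((eventually_Zfun_lt hAe.le hσ.ne' hC.ne' (by positivity : 0 < Ae / 2 + ε)).and
      (eventually_lt_Zfun hAe hσ.ne' hC.ne' hε))
  exact ⟨κ, hκ, fun σ0 h0 hlt ↦ hsub ⟨h0, hlt⟩⟩
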